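/- arXiv:2308.15302 — 5 statements merged into one kernel-verified Lean document; each statement's English description precedes it below -/
import Mathlib

section
/- Let x be a fixed non-zero algebraic number of degree deg x. Then there exists a constant C > 0, depending only on x, such that for all integers a, b with a + b·x ≠ 0, one has |a + b·x| ≥ C · max{|a|, |b|, 1}^(−2·deg x). -/
/-!
For `b ≠ 0` it suffices to bound `|b|^n · |a + b·x|` from below with `n ≤ deg x`.
If `x` is not real, the imaginary part already gives `|a + b·x| ≥ |Im x|`.
If `x = p/q` is rational, `q·(a + b·x)` is a non-zero integer.
If `x` is a real irrational root of an integer polynomial `f`, this is Liouville's inequality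
`|x - c/q| ≥ A / q^(deg f)`, and `f` can be chosen with `deg f ≤ deg x` by clearing the
denominators of the minimal polynomial.
-/

open Polynomial

lemma exists_intPolynomial_ne_zero_natDegree_le_aeval_eq_zero {A : Type*} [CommRing A]
    [Algebra ℚ A] {p : ℚ[X]} (hp : p ≠ 0) {y : A} (hy : aeval y p = 0) :
    ∃ f : ℤ[X], f ≠ 0 ∧ f.natDegree ≤ p.natDegree ∧ aeval y f = 0 :=
  ⟨IsLocalization.integerNormalization (nonZeroDivisors ℤ) p,
    fun h => hp (IsFractionRing.integerNormalization_eq_zero_iff.mp h),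
    natDegree_le_natDegree (degree_mono (IsLocalization.integerNormalization_support _ p)),
    IsLocalization.integerNormalization_aeval_eq_zero _ p hy⟩

lemma inv_den_le_abs_intCast_add_intCast_mul_ratCast (r : ℚ) {a b : ℤ}
    (hab : (a : ℝ) + b * r ≠ 0) : (r.den : ℝ)⁻¹ ≤ |(a : ℝ) + b * r| := by
  have hden : (0 : ℝ) < r.den := by exact_mod_cast r.pos
  have hk : (a : ℝ) + b * r = ((a * r.den + b * r.num : ℤ) : ℝ) / r.den := by
    rw [Rat.cast_def]
    field_simp
    push_cast
    ring
  have hk0 : a * r.den + b * r.num ≠ 0 := by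
    rintro h
    simp [hk, h] at hab
  rw [hk, abs_div, abs_of_pos hden, ← Int.cast_abs, inv_eq_one_div]
  gcongr
  exact_mod_cast Int.one_le_abs hk0

lemma Irrational.exists_pos_le_abs_pow_mul_abs_intCast_add_intCast_mul {t : ℝ}
    (ht : Irrational t) {f : ℤ[X]} (hf : f ≠ 0) (hft : aeval t f = 0) :
    ∃ A > 0, ∀ a b : ℤ, b ≠ 0 → A ≤ |(b : ℝ)| ^ f.natDegree * |a + b * t| := by
  obtain ⟨A, hA, hliouville⟩ :=
    Liouville.exists_pos_real_of_irrational_root ht hf (by rwa [eval_map_algebraMap])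
  have hsucc (a : ℤ) (m : ℕ) :
      A⁻¹ ≤ ((m : ℝ) + 1) ^ f.natDegree * |a + (m + 1) * t| := by
    have hdist : |t - ((-a : ℤ) : ℝ) / (m + 1)| ≤ |a + (m + 1) * t| := by
      rw [show t - ((-a : ℤ) : ℝ) / (m + 1) = (a + (m + 1) * t) / (m + 1) by
        push_cast; field_simp; ring, abs_div, abs_of_pos (by positivity : (0 : ℝ) < m + 1)]
      exact div_le_self (abs_nonneg _) (by simp)
    rw [inv_le_iff_one_le_mul₀' hA]
    calc 1 ≤ ((m : ℝ) + 1) ^ f.natDegree * (|t - ((-a : ℤ) : ℝ) / (m + 1)| * A) :=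
          hliouville (-a) m
      _ ≤ ((m : ℝ) + 1) ^ f.natDegree * (|a + (m + 1) * t| * A) := by gcongr
      _ = A * (((m : ℝ) + 1) ^ f.natDegree * |a + (m + 1) * t|) := by ring
  refine ⟨A⁻¹, inv_pos.mpr hA, fun a b hb => ?_⟩
  rcases hb.lt_or_gt with hneg | hpos
  · obtain ⟨m, hm⟩ := Int.eq_succ_of_zero_lt (neg_pos.mpr hneg)
    have hb' : (b : ℝ) = -((m : ℝ) + 1) := by rw [← neg_neg b, hm]; push_cast; ring
    have habs : |(a : ℝ) + b * t| = |((-a : ℤ) : ℝ) + (m + 1) * t| := by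
      rw [hb', ← abs_neg]; push_cast; ring_nf
    rw [habs, hb', abs_neg, abs_of_pos (by positivity)]
    exact hsucc (-a) m
  · obtain ⟨m, hm⟩ := Int.eq_succ_of_zero_lt hpos
    have hb' : (b : ℝ) = (m : ℝ) + 1 := by rw [hm]; push_cast; ring
    rw [hb', abs_of_pos (by positivity)]
    exact hsucc a m

lemma abs_im_le_norm_intCast_add_intCast_mul (x : ℂ) (a : ℤ) {b : ℤ} (hb : b ≠ 0) :
    |x.im| ≤ ‖(a : ℂ) + b * x‖ :=
  calc |x.im| ≤ |(b : ℝ)| * |x.im| :=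
        le_mul_of_one_le_left (abs_nonneg _) (by exact_mod_cast Int.one_le_abs hb)
    _ = |((a : ℂ) + b * x).im| := by simp [abs_mul]
    _ ≤ ‖(a : ℂ) + b * x‖ := Complex.abs_im_le_norm _

lemma exists_pos_le_abs_pow_mul_abs_intCast_add_intCast_mul {t : ℝ}
    (ht : IsAlgebraic ℚ t) :
    ∃ C > 0, ∃ n ≤ (minpoly ℚ t).natDegree, ∀ a b : ℤ, b ≠ 0 → (a : ℝ) + b * t ≠ 0 →
      C ≤ |(b : ℝ)| ^ n * |a + b * t| := by
  by_cases hirr : Irrational t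
  · obtain ⟨f, hf, hfdeg, hft⟩ := exists_intPolynomial_ne_zero_natDegree_le_aeval_eq_zero
      (minpoly.ne_zero ht.isIntegral) (minpoly.aeval ℚ t)
    obtain ⟨A, hA, hbound⟩ :=
      hirr.exists_pos_le_abs_pow_mul_abs_intCast_add_intCast_mul hf hft
    exact ⟨A, hA, f.natDegree, hfdeg, fun a b hb _ => hbound a b hb⟩
  · obtain ⟨r, rfl⟩ : t ∈ Set.range ((↑) : ℚ → ℝ) := not_not.mp hirr
    refine ⟨(r.den : ℝ)⁻¹, by simp [r.pos], 0, Nat.zero_le _, fun a b _ hab => ?_⟩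
    simpa using inv_den_le_abs_intCast_add_intCast_mul_ratCast r hab

lemma exists_pos_le_abs_pow_mul_norm_intCast_add_intCast_mul {x : ℂ}
    (hx : IsAlgebraic ℚ x) :
    ∃ C > 0, ∃ n ≤ (minpoly ℚ x).natDegree, ∀ a b : ℤ, b ≠ 0 → (a : ℂ) + b * x ≠ 0 →
      C ≤ |(b : ℝ)| ^ n * ‖(a : ℂ) + b * x‖ := by
  by_cases him : x.im = 0
  · obtain ⟨t, rfl⟩ : ∃ t : ℝ, (t : ℂ) = x := ⟨x.re, Complex.ext rfl (by simp [him])⟩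
    have hcast (a b : ℤ) : (a : ℂ) + b * t = ((a + b * t : ℝ) : ℂ) := by push_cast; rfl
    have hminpoly : minpoly ℚ (t : ℂ) = minpoly ℚ t :=
      minpoly.algebraMap_eq Complex.ofReal_injective t
    obtain ⟨C, hC, n, hn, hbound⟩ := exists_pos_le_abs_pow_mul_abs_intCast_add_intCast_mul
      ((isAlgebraic_algebraMap_iff Complex.ofReal_injective).mp hx)
    refine ⟨C, hC, n, hminpoly ▸ hn, fun a b hb hab => ?_⟩
    rw [hcast, Complex.norm_real, Real.norm_eq_abs]
    exact hbound a b hb (by exact_mod_cast (hcast a b) ▸ hab)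
  · exact ⟨|x.im|, abs_pos.mpr him, 0, Nat.zero_le _, fun a b hb _ => by
      simpa using abs_im_le_norm_intCast_add_intCast_mul x a hb⟩

lemma min_le_norm_intCast_add_intCast_mul_mul_pow {x : ℂ} {C : ℝ} {n N : ℕ} (hnN : n ≤ N)
    (hbound : ∀ a b : ℤ, b ≠ 0 → (a : ℂ) + b * x ≠ 0 →
      C ≤ |(b : ℝ)| ^ n * ‖(a : ℂ) + b * x‖)
    {a b : ℤ} (hab : (a : ℂ) + b * x ≠ 0) :
    min C 1 ≤ ‖(a : ℂ) + b * x‖ * max (max (|a| : ℝ) (|b| : ℝ)) 1 ^ N := by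
  set M : ℝ := max (max (|a| : ℝ) (|b| : ℝ)) 1
  have hM : 1 ≤ M := le_max_right _ _
  rcases eq_or_ne b 0 with rfl | hb
  · have ha : a ≠ 0 := by rintro rfl; simp at hab
    calc min C 1 ≤ 1 := min_le_right _ _
      _ ≤ ‖(a : ℂ)‖ * 1 := by
          simpa using (by exact_mod_cast Int.one_le_abs ha : (1 : ℝ) ≤ |a|)
      _ ≤ ‖(a : ℂ) + (0 : ℤ) * x‖ * M ^ N := by
          simp only [Int.cast_zero, zero_mul, add_zero]
          gcongr
          exact one_le_pow₀ hM
  · calc min C 1 ≤ |(b : ℝ)| ^ n * ‖(a : ℂ) + b * x‖ :=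
          (min_le_left _ _).trans (hbound a b hb hab)
      _ ≤ M ^ N * ‖(a : ℂ) + b * x‖ := by
          have hbM : |(b : ℝ)| ≤ M := le_trans (le_max_right _ _) (le_max_left _ _)
          gcongr
          exact (pow_le_pow_left₀ (abs_nonneg _) hbM n).trans (pow_le_pow_right₀ hM hnN)
      _ = ‖(a : ℂ) + b * x‖ * M ^ N := mul_comm _ _

theorem stmt_0_general (x : ℂ) (hx : IsAlgebraic ℚ x) :
    ∃ C : ℝ, 0 < C ∧ ∀ a b : ℤ, (a : ℂ) + (b : ℂ) * x ≠ 0 →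
      C * (max (max (|a| : ℝ) (|b| : ℝ)) 1) ^
          (-(2 * ((minpoly ℚ x).natDegree : ℝ))) ≤
        ‖(a : ℂ) + (b : ℂ) * x‖ := by
  obtain ⟨C, hC, n, hn, hbound⟩ := exists_pos_le_abs_pow_mul_norm_intCast_add_intCast_mul hx
  refine ⟨min C 1, lt_min hC one_pos, fun a b hab => ?_⟩
  have hM : (0 : ℝ) < max (max (|a| : ℝ) (|b| : ℝ)) 1 :=
    one_pos.trans_le (le_max_right _ _)
  rw [Real.rpow_neg hM.le, ← Nat.cast_ofNat, ← Nat.cast_mul, Real.rpow_natCast,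
    ← div_eq_mul_inv, div_le_iff₀ (pow_pos hM _)]
  exact min_le_norm_intCast_add_intCast_mul_mul_pow (hn.trans (Nat.le_mul_of_pos_left _ two_pos))
    hbound hab

/-- Lemma 2.2: for a fixed non-zero algebraic number `x` there is `C > 0`,
depending only on `x`, such that `|a + b·x| ≥ C·max{|a|,|b|,1}^(−2·deg x)` for
all integers `a, b` with `a + b·x ≠ 0`. -/
theorem stmt_0 (x : ℂ) (hx : IsAlgebraic ℚ x) (hx0 : x ≠ 0) :
    ∃ C : ℝ, 0 < C ∧ ∀ a b : ℤ, (a : ℂ) + (b : ℂ) * x ≠ 0 →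
      C * (max (max (|a| : ℝ) (|b| : ℝ)) 1) ^
          (-(2 * ((minpoly ℚ x).natDegree : ℝ))) ≤
        ‖(a : ℂ) + (b : ℂ) * x‖ :=
  stmt_0_general x hx
end

section
/- Let a be an algebraic number of degree d with denominator c_d (the leading coefficient of its minimal polynomial over ℤ). Then H(a)^d = M(a) ≤ |c_d| · max{|a̅|^d, 1}, where a̅ denotes the house of a, M(a) the Mahler measure, and H(a) the absolute Weil height. -/
/-- The minimal polynomial over `ℤ` of an algebraic number: the primitive part
of the integer normalization of `minpoly ℚ x`. -/
noncomputable def intMinpoly (x : ℂ) : Polynomial ℤ :=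
  (IsLocalization.integerNormalization (nonZeroDivisors ℤ) (minpoly ℚ x)).primPart

/-- The Mahler measure of an algebraic number `x`:
`M(x) = |c_d| · ∏_i max{1, |x_i|}` over the conjugates `x_i` of `x`, where `c_d`
is the denominator of `x` (leading coefficient of its `ℤ`-minimal polynomial). -/
noncomputable def mahlerM (x : ℂ) : ℝ :=
  |((intMinpoly x).leadingCoeff : ℝ)| *
    (((minpoly ℚ x).aroots ℂ).map (fun r => max 1 ‖r‖)).prod

/-- The absolute multiplicative Weil height `H(x) = M(x)^(1/deg x)`. -/
noncomputable def height (x : ℂ) : ℝ :=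
  mahlerM x ^ (((minpoly ℚ x).natDegree : ℝ)⁻¹)

/-- The house of an algebraic number `x`. -/
noncomputable def house (x : ℂ) : ℝ :=
  (((minpoly ℚ x).aroots ℂ).map (fun r : ℂ => ‖r‖)).fold max 0

/-!
Every conjugate `r` of `a` satisfies `max 1 |r| ≤ max 1 house(a)`, and there are exactly
`d` conjugates counted with multiplicity, so `∏ max 1 |r| ≤ (max 1 house(a))^d`.
-/

namespace Multiset

variable {α : Type*} [LinearOrder α]

lemma le_fold_max_init (s : Multiset α) (b : α) : b ≤ s.fold max b := by
  induction s using Multiset.induction with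
  | empty => simp
  | cons a s ih => rw [fold_cons_left]; exact ih.trans (le_max_right _ _)

lemma le_fold_max_of_mem {s : Multiset α} {x : α} (b : α) (hx : x ∈ s) : x ≤ s.fold max b := by
  induction s using Multiset.induction with
  | empty => simp at hx
  | cons a s ih =>
    rw [fold_cons_left]
    rcases mem_cons.mp hx with rfl | h
    · exact le_max_left _ _
    · exact (ih h).trans (le_max_right _ _)

end Multiset

lemma max_one_pow_of_nonneg {x : ℝ} (hx : 0 ≤ x) (n : ℕ) : max 1 x ^ n = max (x ^ n) 1 := by
  rcases le_total x 1 with h | h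
  · rw [max_eq_left h, one_pow, max_eq_right (pow_le_one₀ hx h)]
  · rw [max_eq_right h, max_eq_left (one_le_pow₀ h)]

lemma house_nonneg (a : ℂ) : 0 ≤ house a :=
  Multiset.le_fold_max_init _ _

lemma norm_le_house {a r : ℂ} (hr : r ∈ (minpoly ℚ a).aroots ℂ) : ‖r‖ ≤ house a :=
  Multiset.le_fold_max_of_mem _ (Multiset.mem_map_of_mem _ hr)

lemma mahlerM_nonneg (a : ℂ) : 0 ≤ mahlerM a :=
  mul_nonneg (abs_nonneg _) (Multiset.prod_map_nonneg fun _ _ ↦ by positivity)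

lemma height_pow_natDegree {a : ℂ} (ha : IsAlgebraic ℚ a) :
    height a ^ (minpoly ℚ a).natDegree = mahlerM a :=
  Real.rpow_inv_natCast_pow (mahlerM_nonneg a) (minpoly.natDegree_pos ha.isIntegral).ne'

lemma mahlerM_le (a : ℂ) :
    mahlerM a ≤ |((intMinpoly a).leadingCoeff : ℝ)| *
      max (house a ^ (minpoly ℚ a).natDegree) 1 := by
  refine mul_le_mul_of_nonneg_left ?_ (abs_nonneg _)
  calc (((minpoly ℚ a).aroots ℂ).map (fun r => max 1 ‖r‖)).prod
      ≤ (((minpoly ℚ a).aroots ℂ).map (fun _ => max 1 (house a))).prod :=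
        Multiset.prod_map_le_prod_map₀ _ _ (fun _ _ ↦ by positivity)
          fun _ hr ↦ max_le_max le_rfl (norm_le_house hr)
    _ = max 1 (house a) ^ (minpoly ℚ a).natDegree := by
        rw [Multiset.map_const', Multiset.prod_replicate, IsAlgClosed.card_aroots_eq_natDegree]
    _ = max (house a ^ (minpoly ℚ a).natDegree) 1 := max_one_pow_of_nonneg (house_nonneg a) _

/-- Lemma 3.4: `H(a)^d = M(a) ≤ |c_d| · max{house(a)^d, 1}` for an algebraic
number `a` of degree `d` with denominator `c_d`. -/
theorem stmt_2 (a : ℂ) (ha : IsAlgebraic ℚ a) :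
    height a ^ (minpoly ℚ a).natDegree = mahlerM a ∧
      mahlerM a ≤ |((intMinpoly a).leadingCoeff : ℝ)| *
        max (house a ^ (minpoly ℚ a).natDegree) 1 :=
  ⟨height_pow_natDegree ha, mahlerM_le a⟩
end

section
/- Let {y_n} be an unbounded sequence of positive real numbers. Then there are infinitely many positive integers N such that y_N > (1 + 1/N²) · max_{1 ≤ n < N} y_n. -/
/-!
Suppose that from some index `M` on, every `y N` is at most `(1 + 1/N²)` times an earlier term.
Unwinding this, `y N` is bounded by `max_{n ≤ M} y n` times the partial product of
`1 + 1/k²` over `M < k ≤ N`, and that product is at most `exp (∑_{k > M} 1/k²) ≤ exp (2/(M+1))`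
since `∑ 1/k²` converges. So the sequence would be bounded above.
-/

open Finset Real

lemma prod_Ioc_one_add_inv_sq_le_exp (M N : ℕ) :
    ∏ k ∈ Ioc M N, (1 + 1 / (k : ℝ) ^ 2) ≤ exp (2 / (M + 1)) := by
  have hIoc : Ioc M N = Ioo M (N + 1) := by ext; simp only [mem_Ioc, mem_Ioo]; omega
  calc ∏ k ∈ Ioc M N, (1 + 1 / (k : ℝ) ^ 2)
      ≤ exp (∑ k ∈ Ioc M N, 1 / (k : ℝ) ^ 2) :=
        prod_one_add_le_exp_sum _ fun _ ↦ by positivity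
    _ ≤ exp (2 / (M + 1)) := by
        gcongr
        simpa only [hIoc, one_div] using sum_Ioo_inv_sq_le (α := ℝ) M (N + 1)

lemma le_mul_prod_Ioc_of_le_mul_earlier {y c : ℕ → ℝ} {M : ℕ} {B : ℝ}
    (hc : ∀ k, 1 ≤ c k) (hB : 0 ≤ B) (hyB : ∀ n, 1 ≤ n → n ≤ M → y n ≤ B)
    (hstep : ∀ N, M < N → ∃ n, 1 ≤ n ∧ n < N ∧ y N ≤ c N * y n) :
    ∀ N, 1 ≤ N → y N ≤ B * ∏ k ∈ Ioc M N, c k := by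
  intro N
  induction N using Nat.strong_induction_on with
  | _ N ih =>
    intro hN
    rcases le_or_gt N M with hNM | hMN
    · simpa [Ioc_eq_empty_of_le hNM] using hyB N hN hNM
    obtain ⟨n, hn, hnN, hyN⟩ := hstep N hMN
    have hNn : N ∉ Ioc M n := by simp only [mem_Ioc]; omega
    have hsub : insert N (Ioc M n) ⊆ Ioc M N := by
      intro k; simp only [mem_insert, mem_Ioc]; omega
    calc y N ≤ c N * y n := hyN
      _ ≤ c N * (B * ∏ k ∈ Ioc M n, c k) := by
          gcongr
          · exact zero_le_one.trans (hc N)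
          · exact ih n hnN hn
      _ = B * ∏ k ∈ insert N (Ioc M n), c k := by rw [prod_insert hNn]; ring
      _ ≤ B * ∏ k ∈ Ioc M N, c k :=
          mul_le_mul_of_nonneg_left (prod_mono_set_of_one_le hc hsub) hB

theorem stmt_4_general (y : ℕ → ℝ)
    (hunb : ∀ B : ℝ, ∃ n, 1 ≤ n ∧ B < y n) :
    ∀ m : ℕ, ∃ N, m ≤ N ∧ 2 ≤ N ∧
      ∀ n, 1 ≤ n → n < N → (1 + 1 / (N : ℝ) ^ 2) * y n < y N := by
  intro m
  by_contra! hcon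
  set M := max m 2
  obtain ⟨B, hB⟩ := ((Set.finite_Iic M).image y).bddAbove
  have hbound : ∀ N, 1 ≤ N → y N ≤ max B 0 * exp (2 / (M + 1)) := by
    intro N hN
    calc y N ≤ max B 0 * ∏ k ∈ Ioc M N, (1 + 1 / (k : ℝ) ^ 2) :=
          le_mul_prod_Ioc_of_le_mul_earlier (fun _ ↦ le_add_of_nonneg_right (by positivity))
            (le_max_right B 0)
            (fun n _ hnM ↦ (hB ⟨n, hnM, rfl⟩).trans (le_max_left B 0))
            (fun N hMN ↦ hcon N (by omega) (by omega)) N hN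
      _ ≤ max B 0 * exp (2 / (M + 1)) := by
          gcongr
          exact prod_Ioc_one_add_inv_sq_le_exp M N
  obtain ⟨n, hn, hBn⟩ := hunb (max B 0 * exp (2 / (M + 1)))
  exact (hbound n hn).not_gt hBn

/-- Let `{y_n}` be an unbounded sequence of positive real numbers. Then there are
infinitely many positive integers `N` such that
`y_N > (1 + 1/N²) · max_{1 ≤ n < N} y_n`. -/
theorem stmt_4 (y : ℕ → ℝ) (hpos : ∀ n, 1 ≤ n → 0 < y n)
    (hunb : ∀ B : ℝ, ∃ n, 1 ≤ n ∧ B < y n) :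
    ∀ m : ℕ, ∃ N, m ≤ N ∧ 2 ≤ N ∧
      ∀ n, 1 ≤ n → n < N → (1 + 1 / (N : ℝ) ^ 2) * y n < y N :=
  stmt_4_general y hunb
end

section
/- Let ε > 0, 0 < α < 1, 0 ≤ β < ε/(1+ε), and let {a_n}, {b_n} be sequences of positive reals with n^(1+ε) ≤ a_n ≤ a_{n+1} and b_n ≤ a_n^β·2^((log₂ a_n)^α) for all sufficiently large n. Then there exists a fixed 0 < γ < 1 such that for all sufficiently large N, ∑_{n=N}^∞ b_n/a_n ≤ a_N^(−γ). -/
/-!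
Write `g = ε/(1+ε) - β > 0`. Since `(log₂ x)^α = o(log₂ x)`, eventually
`2^((log₂ aₙ)^α) ≤ aₙ^(g/4)`, so `bₙ/aₙ ≤ aₙ^(β + g/4 - 1) = aₙ^(-g/4) · aₙ^(-t)` with
`t = 1/(1+ε) + g/2`. The growth `n^(1+ε) ≤ aₙ` gives `aₙ^(-t) ≤ n^(-(1+ε)t)`, a summable sequence
because `(1+ε)t > 1`, while monotonicity gives `aₙ^(-g/4) ≤ a_N^(-g/4)` for `n ≥ N`. Hence the tail
from `N` is at most `a_N^(-g/4)` times the tail of a convergent series, which is eventually `≤ 1`.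
-/

open Filter Real

theorem eventually_rpow_logb_rpow_le_rpow {b α s : ℝ} (hb : 1 < b) (hα : α < 1) (hs : 0 < s) :
    ∀ᶠ x : ℝ in atTop, b ^ logb b x ^ α ≤ x ^ s := by
  have hsublinear : ∀ᶠ y : ℝ in atTop, y ^ α ≤ s * y := by
    filter_upwards [(tendsto_rpow_neg_atTop (sub_pos.2 hα)).eventually (gt_mem_nhds hs),
      eventually_gt_atTop 0] with y hy hy0
    calc y ^ α = y ^ (-(1 - α)) * y := by
          rw [← rpow_add_one hy0.ne']; ring_nf
      _ ≤ s * y := by gcongr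
  filter_upwards [(tendsto_logb_atTop hb).eventually hsublinear, eventually_gt_atTop 0]
    with x hx hx0
  calc b ^ logb b x ^ α ≤ b ^ (s * logb b x) := rpow_le_rpow_of_exponent_le hb.le hx
    _ = x ^ s := by
      rw [mul_comm, rpow_mul (by linarith), rpow_logb (by linarith) hb.ne' hx0]

theorem tendsto_atTop_of_natCast_rpow_le {a : ℕ → ℝ} {q : ℝ} (hq : 0 < q)
    (ha : ∀ᶠ n : ℕ in atTop, (n : ℝ) ^ q ≤ a n) : Tendsto a atTop atTop :=
  tendsto_atTop_mono' atTop ha ((tendsto_rpow_atTop hq).comp tendsto_natCast_atTop_atTop)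

theorem div_le_rpow_neg_mul_rpow {x y z q β δ t : ℝ} (hx : 0 < x) (hz : 0 < z)
    (hzx : z ^ q ≤ x) (ht : 0 ≤ t) (hy : y ≤ x ^ β * x ^ δ) :
    y / x ≤ z ^ (-(q * t)) * x ^ (β + δ + t - 1) := by
  calc y / x ≤ x ^ β * x ^ δ / x := by gcongr
    _ = x ^ (-t) * x ^ (β + δ + t - 1) := by
      rw [← rpow_add hx, ← rpow_sub_one hx.ne', ← rpow_add hx]
      ring_nf
    _ ≤ (z ^ q) ^ (-t) * x ^ (β + δ + t - 1) := mul_le_mul_of_nonneg_right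
      (rpow_le_rpow_of_nonpos (rpow_pos_of_pos hz q) hzx (neg_nonpos.2 ht)) (rpow_nonneg hx.le _)
    _ = z ^ (-(q * t)) * x ^ (β + δ + t - 1) := by rw [← rpow_mul hz.le, mul_neg]

theorem eventually_tsum_nat_add_le_rpow_neg {a c f : ℕ → ℝ} {s : ℝ} (hs : 0 ≤ s)
    (ha : ∀ᶠ n in atTop, 1 ≤ a n) (hmono : ∀ᶠ n in atTop, a n ≤ a (n + 1))
    (hc0 : ∀ n, 0 ≤ c n) (hc : Summable c) (hf0 : ∀ n, 0 ≤ f n)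
    (hfc : ∀ᶠ n in atTop, f n ≤ c n * a n ^ (-s)) :
    ∀ᶠ N in atTop, ∑' k, f (N + k) ≤ a N ^ (-s) := by
  obtain ⟨M, hM⟩ := eventually_atTop.1 (ha.and (hmono.and hfc))
  have htail : ∀ᶠ N in atTop, ∑' k, c (N + k) ≤ 1 := by
    simpa only [add_comm] using (tendsto_sum_nat_add c).eventually (ge_mem_nhds one_pos)
  filter_upwards [eventually_ge_atTop M, htail] with N hNM hN
  have haN : 0 < a N := one_pos.trans_le (hM N hNM).1
  have hmonoN : Monotone fun k => a (N + k) :=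
    monotone_nat_of_le_succ fun k => (hM (N + k) (by omega)).2.1
  have hbound (k : ℕ) : f (N + k) ≤ c (N + k) * a N ^ (-s) :=
    (hM (N + k) (by omega)).2.2.trans <| mul_le_mul_of_nonneg_left
      (rpow_le_rpow_of_nonpos haN (hmonoN k.zero_le) (neg_nonpos.2 hs)) (hc0 _)
  have hcN : Summable fun k => c (N + k) * a N ^ (-s) := by
    simpa only [add_comm] using ((summable_nat_add_iff N).2 hc).mul_right (a N ^ (-s))
  calc ∑' k, f (N + k) ≤ ∑' k, c (N + k) * a N ^ (-s) :=
        (hcN.of_nonneg_of_le (fun k => hf0 _) hbound).tsum_le_tsum hbound hcN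
    _ = (∑' k, c (N + k)) * a N ^ (-s) := tsum_mul_right
    _ ≤ a N ^ (-s) := mul_le_of_le_one_left (rpow_nonneg haN.le _) hN

open Filter in
theorem stmt_16_general (ε α β : ℝ) (hε : 0 < ε) (hα1 : α < 1)
    (hβ0 : 0 ≤ β) (hβ : β < ε / (1 + ε)) (a b : ℕ → ℝ)
    (hapos : ∀ n, 0 < a n) (hbpos : ∀ n, 0 < b n)
    (hgrow : ∀ᶠ n : ℕ in atTop,
      (n : ℝ) ^ (1 + ε) ≤ a n ∧ a n ≤ a (n + 1) ∧
        b n ≤ a n ^ β * 2 ^ (Real.logb 2 (a n)) ^ α) :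
    ∃ γ : ℝ, 0 < γ ∧ γ < 1 ∧ ∀ᶠ N : ℕ in atTop,
      (∑' k : ℕ, b (N + k) / a (N + k)) ≤ a N ^ (-γ) := by
  set g := ε / (1 + ε) - β
  set t := 1 / (1 + ε) + g / 2
  have hg : 0 < g := sub_pos.2 hβ
  have hg1 : g < 1 := by
    have : ε / (1 + ε) < 1 := (div_lt_one (by linarith)).2 (by linarith)
    linarith
  have ha : Tendsto a atTop atTop :=
    tendsto_atTop_of_natCast_rpow_le (by linarith) (hgrow.mono fun n hn => hn.1)
  have hsummable : Summable fun n : ℕ => (n : ℝ) ^ (-((1 + ε) * t)) := by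
    have : (1 + ε) * t = 1 + (1 + ε) * (g / 2) := by simp only [t]; field_simp
    exact summable_nat_rpow.2 (by nlinarith)
  have hexponent : β + g / 4 + t - 1 = -(g / 4) := by simp only [t, g]; field_simp; ring
  have hterm : ∀ᶠ n : ℕ in atTop,
      b n / a n ≤ (n : ℝ) ^ (-((1 + ε) * t)) * a n ^ (-(g / 4)) := by
    filter_upwards [hgrow, ha.eventually (eventually_rpow_logb_rpow_le_rpow one_lt_two hα1
      (by positivity : 0 < g / 4)), eventually_gt_atTop 0] with n hn hlog hn0
    rw [← hexponent]
    exact div_le_rpow_neg_mul_rpow (hapos n) (by exact_mod_cast hn0) hn.1 (by positivity)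
      (hn.2.2.trans (mul_le_mul_of_nonneg_left hlog (rpow_nonneg (hapos n).le β)))
  refine ⟨g / 4, by positivity, by linarith, ?_⟩
  exact eventually_tsum_nat_add_le_rpow_neg (by positivity) (ha.eventually_ge_atTop 1)
    (hgrow.mono fun n hn => hn.2.1) (fun n => by positivity) hsummable
    (fun n => (div_pos (hbpos n) (hapos n)).le) hterm

open Filter in
/-- Under the standing growth assumptions, there is a fixed `0 < γ < 1` such
that for all sufficiently large `N`, `∑_{n=N}^∞ b_n/a_n ≤ a_N^(−γ)`. -/
theorem stmt_16 (ε α β : ℝ) (hε : 0 < ε) (hα0 : 0 < α) (hα1 : α < 1)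
    (hβ0 : 0 ≤ β) (hβ : β < ε / (1 + ε)) (a b : ℕ → ℝ)
    (hapos : ∀ n, 0 < a n) (hbpos : ∀ n, 0 < b n)
    (hgrow : ∀ᶠ n : ℕ in atTop,
      (n : ℝ) ^ (1 + ε) ≤ a n ∧ a n ≤ a (n + 1) ∧
        b n ≤ a n ^ β * 2 ^ (Real.logb 2 (a n)) ^ α) :
    ∃ γ : ℝ, 0 < γ ∧ γ < 1 ∧ ∀ᶠ N : ℕ in atTop,
      (∑' k : ℕ, b (N + k) / a (N + k)) ≤ a N ^ (-γ) :=
  stmt_16_general ε α β hε hα1 hβ0 hβ a b hapos hbpos hgrow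
end

section
/- Let ε > 0, 0 < α < 1, 0 ≤ β < ε/(1+ε), and let {a_n}, {b_n} be sequences of positive reals with n^(1+ε) ≤ a_n ≤ a_{n+1}, b_n ≤ a_n^β·2^((log₂ a_n)^α) for all sufficiently large n, and additionally a_n ≥ 2^n for all sufficiently large n. Then there is a fixed 0 < Γ < 1 such that for all sufficiently large N, ∑_{n=N}^∞ b_n/a_n ≤ 2^((log₂ a_N)^Γ) / a_N^(1−β). -/
/-!
Write `L n = log₂ (a n)`; then `a n ≥ 2 ^ n` gives `L n ≥ n`, and the bound on `b n` gives
`b n / a n ≤ 2 ^ (L n ^ α - (1 - β) * L n)`. For `x ≥ x₀ > 0` we have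
`x ^ α ≤ x₀ ^ α + x₀ ^ (α - 1) * (x - x₀)`, and `L N ^ (α - 1) ≤ (1 - β) / 2` for large `N`, so
the exponent decreases at rate at least `(1 - β) / 2` beyond `L N`. Hence every term of the tail
is at most `A = 2 ^ (L N ^ α) / a N ^ (1 - β)`, and the terms after the first `⌈L N⌉` are
dominated by a geometric series `A * ρ ^ j`. The tail is therefore `(L N + O(1)) * A`, and the
factor `(L N + O(1)) * 2 ^ (L N ^ α)` is absorbed into `2 ^ (L N ^ Γ)` for any `α < Γ`.
-/

open Filter Real

lemma rpow_le_rpow_add_rpow_sub_one_mul {α x₀ x : ℝ} (hα : α ≤ 1) (hx₀ : 0 < x₀) (hx : x₀ ≤ x) :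
    x ^ α ≤ x₀ ^ α + x₀ ^ (α - 1) * (x - x₀) := by
  have hx0 : 0 < x := hx₀.trans_le hx
  have hdecr : x ^ (α - 1) ≤ x₀ ^ (α - 1) := rpow_le_rpow_of_nonpos hx₀ hx (by linarith)
  calc x ^ α = x ^ (α - 1) * x := by rw [← rpow_add_one hx0.ne', sub_add_cancel]
    _ ≤ x₀ ^ (α - 1) * x := by gcongr
    _ = x₀ ^ α + x₀ ^ (α - 1) * (x - x₀) := by
      rw [mul_sub, ← rpow_add_one hx₀.ne' (α - 1), sub_add_cancel]; ring

lemma two_rpow_rpow_sub_mul_le {α s x₀ x : ℝ} (hα : α ≤ 1) (hx₀ : 0 < x₀) (hx : x₀ ≤ x)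
    (hsmall : x₀ ^ (α - 1) ≤ s / 2) :
    (2 : ℝ) ^ (x ^ α - s * x) ≤ 2 ^ (x₀ ^ α - s * x₀) * 2 ^ (-(s / 2 * (x - x₀))) := by
  have hpow_le := rpow_le_rpow_add_rpow_sub_one_mul hα hx₀ hx
  have hslope : x₀ ^ (α - 1) * (x - x₀) ≤ s / 2 * (x - x₀) :=
    mul_le_mul_of_nonneg_right hsmall (sub_nonneg.2 hx)
  rw [← rpow_add two_pos]
  exact rpow_le_rpow_of_exponent_le one_le_two (by linarith)

lemma two_rpow_sub_mul_logb {a : ℝ} (ha : 0 < a) (t s : ℝ) :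
    (2 : ℝ) ^ (t - s * logb 2 a) = 2 ^ t / a ^ s := by
  rw [rpow_sub two_pos, mul_comm, rpow_mul zero_le_two, rpow_logb two_pos (by norm_num) ha]

lemma div_le_two_rpow_of_le_rpow_mul {a b α β : ℝ} (ha : 0 < a)
    (hb : b ≤ a ^ β * 2 ^ logb 2 a ^ α) :
    b / a ≤ 2 ^ (logb 2 a ^ α - (1 - β) * logb 2 a) := by
  rw [two_rpow_sub_mul_logb ha, rpow_sub ha, rpow_one, div_div_eq_mul_div]
  calc b / a ≤ a ^ β * 2 ^ logb 2 a ^ α / a := by gcongr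
    _ = 2 ^ logb 2 a ^ α * a ^ β / a := by ring

lemma tsum_le_of_le_of_le_geometric {f : ℕ → ℝ} {A ρ : ℝ} (K : ℕ) (hf : ∀ k, 0 ≤ f k)
    (hA : ∀ k, f k ≤ A) (hρ₀ : 0 ≤ ρ) (hρ₁ : ρ < 1) (htail : ∀ j, f (j + K) ≤ A * ρ ^ j) :
    ∑' k, f k ≤ (K + (1 - ρ)⁻¹) * A := by
  have hgeom : Summable fun j => A * ρ ^ j := (summable_geometric_of_lt_one hρ₀ hρ₁).mul_left A
  have htail_summable : Summable fun j => f (j + K) :=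
    hgeom.of_nonneg_of_le (fun j => hf _) htail
  have hhead : ∑ k ∈ Finset.range K, f k ≤ K * A := by
    simpa using Finset.sum_le_card_nsmul (Finset.range K) f A fun k _ => hA k
  have htail_le : ∑' j, f (j + K) ≤ A * (1 - ρ)⁻¹ :=
    calc ∑' j, f (j + K) ≤ ∑' j, A * ρ ^ j := htail_summable.tsum_le_tsum htail hgeom
      _ = A * (1 - ρ)⁻¹ := by rw [tsum_mul_left, tsum_geometric_of_lt_one hρ₀ hρ₁]
  rw [← ((summable_nat_add_iff K).1 htail_summable).sum_add_tsum_nat_add K]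
  linarith

lemma eventually_add_mul_two_rpow_le_two_rpow (D : ℝ) {α Γ : ℝ} (hαΓ : α < Γ) (hΓ : 0 < Γ) :
    ∀ᶠ L : ℝ in atTop, (L + D) * 2 ^ L ^ α ≤ 2 ^ L ^ Γ := by
  have hlog : ∀ᶠ L : ℝ in atTop, ‖log L‖ ≤ log 2 / 4 * ‖L ^ Γ‖ :=
    (isLittleO_log_rpow_atTop hΓ).bound (by positivity)
  have hpow : ∀ᶠ L : ℝ in atTop, L ^ (-(Γ - α)) < 1 / 2 :=
    (tendsto_rpow_neg_atTop (sub_pos.2 hαΓ)).eventually_lt_const (by norm_num)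
  filter_upwards [hlog, hpow, eventually_ge_atTop (max D 2)] with L hlog hpow hL
  have hL0 : 0 < L := by linarith [le_max_right D 2]
  have hLΓ : 0 < L ^ Γ := rpow_pos_of_pos hL0 Γ
  rw [norm_eq_abs, norm_of_nonneg hLΓ.le] at hlog
  have hsq : L + D ≤ L ^ 2 := by nlinarith [le_max_left D 2, le_max_right D 2]
  have hsq_le : L ^ 2 ≤ 2 ^ (L ^ Γ / 2) := by
    rw [le_rpow_iff_log_le (by positivity) two_pos, log_pow, Nat.cast_ofNat]
    nlinarith [le_abs_self (log L), log_pos one_lt_two]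
  have hαle : L ^ α ≤ L ^ Γ / 2 := by
    have hsplit : L ^ α = L ^ (-(Γ - α)) * L ^ Γ := by rw [← rpow_add hL0]; ring_nf
    rw [hsplit]
    nlinarith
  calc (L + D) * 2 ^ L ^ α ≤ 2 ^ (L ^ Γ / 2) * 2 ^ (L ^ Γ / 2) := by
        gcongr
        · exact hsq.trans hsq_le
        · norm_num
    _ = 2 ^ L ^ Γ := by rw [← rpow_add two_pos]; ring_nf

lemma tsum_div_le_of_le_logb {a b : ℕ → ℝ} {α β : ℝ} {N : ℕ} (hα : α ≤ 1)
    (ha : ∀ n, 0 < a n) (hb : ∀ n, 0 ≤ b n)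
    (hbound : ∀ n ≥ N, b n ≤ a n ^ β * 2 ^ logb 2 (a n) ^ α)
    (hmono : ∀ n ≥ N, logb 2 (a N) ≤ logb 2 (a n))
    (hlin : ∀ n ≥ N, (n : ℝ) ≤ logb 2 (a n))
    (hpos : 0 < logb 2 (a N)) (hsmall : logb 2 (a N) ^ (α - 1) ≤ (1 - β) / 2) :
    ∑' k, b (N + k) / a (N + k) ≤
      (logb 2 (a N) + 1 + (1 - 2 ^ (-((1 - β) / 2)))⁻¹) * 2 ^ logb 2 (a N) ^ α /
        a N ^ (1 - β) := by
  set L : ℕ → ℝ := fun n => logb 2 (a n)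
  set c := (1 - β) / 2
  set A : ℝ := 2 ^ (L N ^ α - (1 - β) * L N) with hA
  have hc0 : 0 < c := (rpow_pos_of_pos hpos _).trans_le hsmall
  have hterm : ∀ n ≥ N, b n / a n ≤ A * 2 ^ (-(c * (L n - L N))) := fun n hn =>
    (div_le_two_rpow_of_le_rpow_mul (ha n) (hbound n hn)).trans
      (two_rpow_rpow_sub_mul_le hα hpos (hmono n hn) hsmall)
  have hρ : (2 : ℝ) ^ (-c) < 1 := rpow_lt_one_of_one_lt_of_neg one_lt_two (neg_lt_zero.2 hc0)
  have hA0 : 0 < A := rpow_pos_of_pos two_pos _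
  set K := ⌈L N⌉₊
  have hhead : ∀ k, b (N + k) / a (N + k) ≤ A := fun k =>
    (hterm _ (Nat.le_add_right _ _)).trans <| mul_le_of_le_one_right hA0.le <|
      rpow_le_one_of_one_le_of_nonpos one_le_two <| by
        nlinarith [hmono (N + k) (Nat.le_add_right _ _)]
  have htail : ∀ j, b (N + (j + K)) / a (N + (j + K)) ≤ A * (2 ^ (-c)) ^ j := by
    intro j
    have hfar : L N + j ≤ L (N + (j + K)) :=
      calc L N + j ≤ ((N + (j + K) : ℕ) : ℝ) := by
            push_cast; linarith [Nat.le_ceil (L N), (N.cast_nonneg : (0 : ℝ) ≤ N)]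
        _ ≤ L (N + (j + K)) := hlin _ (Nat.le_add_right _ _)
    refine (hterm _ (Nat.le_add_right _ _)).trans (mul_le_mul_of_nonneg_left ?_ hA0.le)
    rw [← rpow_natCast, ← rpow_mul zero_le_two]
    exact rpow_le_rpow_of_exponent_le one_le_two (by nlinarith)
  have hK : (K : ℝ) ≤ L N + 1 := (Nat.ceil_lt_add_one hpos.le).le
  calc ∑' k, b (N + k) / a (N + k) ≤ (K + (1 - 2 ^ (-c))⁻¹) * A :=
        tsum_le_of_le_of_le_geometric K (fun k => div_nonneg (hb _) (ha _).le) hhead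
          (rpow_pos_of_pos two_pos _).le hρ htail
    _ ≤ (L N + 1 + (1 - 2 ^ (-c))⁻¹) * A := by gcongr
    _ = _ := by rw [hA, two_rpow_sub_mul_logb (ha N), mul_div_assoc]

theorem stmt_17_general (ε α β : ℝ) (hε : 0 < ε) (hα0 : 0 < α) (hα1 : α < 1)
    (hβ : β < ε / (1 + ε)) (a b : ℕ → ℝ)
    (hapos : ∀ n, 0 < a n) (hbpos : ∀ n, 0 < b n)
    (hgrow : ∀ᶠ n : ℕ in atTop,
      (n : ℝ) ^ (1 + ε) ≤ a n ∧ a n ≤ a (n + 1) ∧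
        b n ≤ a n ^ β * 2 ^ (Real.logb 2 (a n)) ^ α)
    (h2n : ∀ᶠ n : ℕ in atTop, (2 : ℝ) ^ (n : ℕ) ≤ a n) :
    ∃ Γ : ℝ, 0 < Γ ∧ Γ < 1 ∧ ∀ᶠ N : ℕ in atTop,
      (∑' k : ℕ, b (N + k) / a (N + k)) ≤
        2 ^ (Real.logb 2 (a N)) ^ Γ / a N ^ (1 - β) := by
  have hβ1 : β < 1 := hβ.trans ((div_lt_one (by linarith)).2 (by linarith))
  refine ⟨(1 + α) / 2, by linarith, by linarith, ?_⟩
  obtain ⟨M, hM⟩ := eventually_atTop.1 (hgrow.and h2n)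
  have hlin : ∀ n ≥ M, (n : ℝ) ≤ logb 2 (a n) := fun n hn => by
    rw [le_logb_iff_rpow_le one_lt_two (hapos n), rpow_natCast]
    exact (hM n hn).2
  have hmono : MonotoneOn (fun n => logb 2 (a n)) (Set.Ici M) :=
    monotoneOn_nat_Ici_of_le_succ fun n hn =>
      logb_le_logb_of_le one_lt_two (hapos n) (hM n hn).1.2.1
  have hL : Tendsto (fun n => logb 2 (a n)) atTop atTop :=
    tendsto_atTop_mono' atTop (eventually_atTop.2 ⟨M, hlin⟩) tendsto_natCast_atTop_atTop
  have hsmall : ∀ᶠ L : ℝ in atTop, L ^ (α - 1) ≤ (1 - β) / 2 := by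
    simpa using (tendsto_rpow_neg_atTop (sub_pos.2 hα1)).eventually_le_const
      (by linarith : (0 : ℝ) < (1 - β) / 2)
  filter_upwards [eventually_ge_atTop M, hL.eventually (eventually_gt_atTop 0),
    hL.eventually hsmall, hL.eventually (eventually_add_mul_two_rpow_le_two_rpow
      (1 + (1 - 2 ^ (-((1 - β) / 2)))⁻¹) (by linarith : α < (1 + α) / 2) (by linarith))]
    with N hN hpos hsm hbig
  calc ∑' k, b (N + k) / a (N + k)
      ≤ (logb 2 (a N) + 1 + (1 - 2 ^ (-((1 - β) / 2)))⁻¹) * 2 ^ logb 2 (a N) ^ α /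
          a N ^ (1 - β) :=
        tsum_div_le_of_le_logb hα1.le hapos (fun n => (hbpos n).le)
          (fun n hn => (hM n (hN.trans hn)).1.2.2) (fun n hn => hmono hN (hN.trans hn) hn)
          (fun n hn => hlin n (hN.trans hn)) hpos hsm
    _ ≤ 2 ^ logb 2 (a N) ^ ((1 + α) / 2) / a N ^ (1 - β) := by
        rw [add_assoc]
        gcongr
        exact (rpow_pos_of_pos (hapos N) _).le

open Filter in
/-- As in `stmt_16`, but additionally `a_n ≥ 2^n` for large `n`: then there is a
fixed `0 < Γ < 1` such that for all sufficiently large `N`,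
`∑_{n=N}^∞ b_n/a_n ≤ 2^((log₂ a_N)^Γ)/a_N^(1−β)`. -/
theorem stmt_17 (ε α β : ℝ) (hε : 0 < ε) (hα0 : 0 < α) (hα1 : α < 1)
    (hβ0 : 0 ≤ β) (hβ : β < ε / (1 + ε)) (a b : ℕ → ℝ)
    (hapos : ∀ n, 0 < a n) (hbpos : ∀ n, 0 < b n)
    (hgrow : ∀ᶠ n : ℕ in atTop,
      (n : ℝ) ^ (1 + ε) ≤ a n ∧ a n ≤ a (n + 1) ∧
        b n ≤ a n ^ β * 2 ^ (Real.logb 2 (a n)) ^ α)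
    (h2n : ∀ᶠ n : ℕ in atTop, (2 : ℝ) ^ (n : ℕ) ≤ a n) :
    ∃ Γ : ℝ, 0 < Γ ∧ Γ < 1 ∧ ∀ᶠ N : ℕ in atTop,
      (∑' k : ℕ, b (N + k) / a (N + k)) ≤
        2 ^ (Real.logb 2 (a N)) ^ Γ / a N ^ (1 - β) :=
  stmt_17_general ε α β hε hα0 hα1 hβ a b hapos hbpos hgrow h2n
end
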